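/- Let μ > 0, γ > 0 with γ ≥ √μ/2, and let x ∈ ℝ. Set p = γ² + 2μ − x²/3, q = x·γ² + 2x³/27 − (x/3)(γ² + 2μ), D = p³/27 + q²/4, s = (q/2 + √D)^{1/3}, t = (q/2 − √D)^{1/3} (real cube roots), and z = x/3 + s + t. Then z is the unique global minimizer over ℝ of the proximal cost function g(u) = (x − u)²/(2μ) − log(γ/(γ² + u²)); that is, prox_Cauchy^μ(x) = z. -/

import Mathlib

/-- The real cube root function: preserves sign, defined for all reals. -/
noncomputable def cbrt (a : ℝ) : ℝ := Real.sign a * |a| ^ ((1 : ℝ) / 3)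

/-!
Under `μ ≤ 4γ²` the derivative `u ↦ (u - x)/μ + 2u/(γ² + u²)` of the cost is strictly increasing,
so the cost is strictly convex and its unique critical point is its unique global minimizer.
Clearing denominators, the critical points are the real roots of
`u³ - x u² + (γ² + 2μ) u - x γ²`, which becomes `y³ + p y = q` under `u = x/3 + y`.
The discriminant `D` is nonnegative under the same condition, so Cardano's formula yields the root.
-/

lemma cbrt_pow_three (a : ℝ) : cbrt a ^ 3 = a := by
  rw [cbrt, mul_pow, ← Real.rpow_natCast (|a| ^ ((1 : ℝ) / 3)) 3,
    ← Real.rpow_mul (abs_nonneg a)]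
  norm_num
  rcases lt_trichotomy a 0 with h | rfl | h
  · rw [Real.sign_of_neg h, abs_of_neg h]; ring
  · simp
  · rw [Real.sign_of_pos h, abs_of_pos h]; ring

lemma cardano_formula {p q s t : ℝ} (hD : 0 ≤ p ^ 3 / 27 + q ^ 2 / 4)
    (hs : s = cbrt (q / 2 + √(p ^ 3 / 27 + q ^ 2 / 4)))
    (ht : t = cbrt (q / 2 - √(p ^ 3 / 27 + q ^ 2 / 4))) :
    (s + t) ^ 3 + p * (s + t) = q := by
  have hs3 : s ^ 3 = q / 2 + √(p ^ 3 / 27 + q ^ 2 / 4) := hs ▸ cbrt_pow_three _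
  have ht3 : t ^ 3 = q / 2 - √(p ^ 3 / 27 + q ^ 2 / 4) := ht ▸ cbrt_pow_three _
  have hst : s * t = -(p / 3) := by
    rw [← (by decide : Odd 3).pow_inj, mul_pow, hs3, ht3]
    linear_combination -Real.sq_sqrt hD
  linear_combination hs3 + ht3 + 3 * (s + t) * hst

lemma lt_of_strictMono_deriv_of_deriv_eq_zero {f f' : ℝ → ℝ} (hf : ∀ u, HasDerivAt f (f' u) u)
    (hf' : StrictMono f') {z : ℝ} (hz : f' z = 0) {u : ℝ} (hu : u ≠ z) : f z < f u := by
  have hderiv : deriv f = f' := funext fun v => (hf v).deriv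
  have hcont : Continuous f := continuous_iff_continuousAt.2 fun v => (hf v).continuousAt
  rcases hu.lt_or_gt with hlt | hgt
  · refine strictAntiOn_of_deriv_neg (convex_Iic z) hcont.continuousOn (fun v hv => ?_)
      (Set.mem_Iic.2 hlt.le) (Set.mem_Iic.2 le_rfl) hlt
    rw [interior_Iic] at hv
    rw [hderiv, ← hz]
    exact hf' hv
  · refine strictMonoOn_of_deriv_pos (convex_Ici z) hcont.continuousOn (fun v hv => ?_)
      (Set.mem_Ici.2 le_rfl) (Set.mem_Ici.2 hgt.le) hgt
    rw [interior_Ici] at hv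
    rw [hderiv, ← hz]
    exact hf' hv

section CauchyProx

variable {μ γ : ℝ}

noncomputable def cauchyProxCost (μ γ x u : ℝ) : ℝ :=
  (x - u) ^ 2 / (2 * μ) - Real.log (γ / (γ ^ 2 + u ^ 2))

lemma hasDerivAt_cauchyProxCost (hγ : γ ≠ 0) (x u : ℝ) :
    HasDerivAt (cauchyProxCost μ γ x) ((u - x) / μ + 2 * u / (γ ^ 2 + u ^ 2)) u := by
  have hpos : ∀ v : ℝ, γ ^ 2 + v ^ 2 ≠ 0 := fun v => by positivity
  have hsplit : cauchyProxCost μ γ x =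
      fun v => (x - v) ^ 2 / (2 * μ) + Real.log (γ ^ 2 + v ^ 2) - Real.log γ := by
    funext v
    rw [cauchyProxCost, Real.log_div hγ (hpos v)]
    ring
  rw [hsplit]
  have hquad : HasDerivAt (fun v : ℝ => (x - v) ^ 2 / (2 * μ)) ((u - x) / μ) u := by
    refine ((((hasDerivAt_id' u).const_sub x).pow 2).div_const (2 * μ)).congr_deriv ?_
    ring
  have hlog : HasDerivAt (fun v : ℝ => Real.log (γ ^ 2 + v ^ 2)) (2 * u / (γ ^ 2 + u ^ 2)) u := by
    convert ((hasDerivAt_pow 2 u).const_add (γ ^ 2)).log (hpos u) using 1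
    ring
  exact (hquad.add hlog).sub_const _

lemma strictMono_deriv_cauchyProxCost (hμ : 0 < μ) (hγ : γ ≠ 0) (hμγ : μ ≤ 4 * γ ^ 2) (x : ℝ) :
    StrictMono fun u : ℝ => (u - x) / μ + 2 * u / (γ ^ 2 + u ^ 2) := by
  intro a b hab
  have ha : 0 < γ ^ 2 + a ^ 2 := by positivity
  have hb : 0 < γ ^ 2 + b ^ 2 := by positivity
  -- `(γ² + a²)(γ² + b²) + 8γ²(γ² - ab) = (3γ² - ab)² + γ²(a - b)²`
  have key : 0 < (γ ^ 2 + a ^ 2) * (γ ^ 2 + b ^ 2) + 2 * μ * (γ ^ 2 - a * b) := by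
    rcases le_total 0 (γ ^ 2 - a * b) with h | h
    · nlinarith [mul_pos ha hb, mul_nonneg hμ.le h]
    · nlinarith [mul_nonneg (by linarith : 0 ≤ 4 * γ ^ 2 - μ) (neg_nonneg.2 h),
        sq_nonneg (3 * γ ^ 2 - a * b), mul_pos (by positivity : 0 < γ ^ 2) (pow_pos (sub_pos.2 hab) 2)]
  have hdiff : (b - x) / μ + 2 * b / (γ ^ 2 + b ^ 2) - ((a - x) / μ + 2 * a / (γ ^ 2 + a ^ 2)) =
      (b - a) * ((γ ^ 2 + a ^ 2) * (γ ^ 2 + b ^ 2) + 2 * μ * (γ ^ 2 - a * b)) /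
        (μ * ((γ ^ 2 + a ^ 2) * (γ ^ 2 + b ^ 2))) := by
    field_simp
    ring
  have hpos : 0 < (b - a) * ((γ ^ 2 + a ^ 2) * (γ ^ 2 + b ^ 2) + 2 * μ * (γ ^ 2 - a * b)) /
      (μ * ((γ ^ 2 + a ^ 2) * (γ ^ 2 + b ^ 2))) := by
    have hba := sub_pos.2 hab
    positivity
  linarith

lemma cardano_discriminant_nonneg (hμ : 0 < μ) (hμγ : μ ≤ 4 * γ ^ 2) (x : ℝ) :
    0 ≤ (γ ^ 2 + 2 * μ - x ^ 2 / 3) ^ 3 / 27 +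
      (x * γ ^ 2 + 2 * x ^ 3 / 27 - (x / 3) * (γ ^ 2 + 2 * μ)) ^ 2 / 4 := by
  have hc : (0 : ℝ) ≤ 3 * γ ^ 2 - 3 * μ / 4 := by linarith
  nlinarith [sq_nonneg ((27 * μ / 2 + 18 * (3 * γ ^ 2 - 3 * μ / 4)) * (x ^ 2 - 27 * μ / 4)
      + 81 / 2 * μ * (3 * γ ^ 2 - 3 * μ / 4) + 6 * (3 * γ ^ 2 - 3 * μ / 4) ^ 2),
    mul_nonneg hμ.le (pow_nonneg hc 3)]

lemma deriv_cauchyProxCost_eq_zero_of_cardano (hμ : μ ≠ 0) (hγ : γ ≠ 0) {x y : ℝ}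
    (hy : y ^ 3 + (γ ^ 2 + 2 * μ - x ^ 2 / 3) * y =
      x * γ ^ 2 + 2 * x ^ 3 / 27 - (x / 3) * (γ ^ 2 + 2 * μ)) :
    (x / 3 + y - x) / μ + 2 * (x / 3 + y) / (γ ^ 2 + (x / 3 + y) ^ 2) = 0 := by
  have : γ ^ 2 + (x / 3 + y) ^ 2 ≠ 0 := by positivity
  field_simp
  linear_combination 27 * hy

end CauchyProx

/-- For μ > 0, γ > 0 with γ ≥ √μ/2 and x ∈ ℝ, the Cardano point
z = x/3 + s + t (with p, q, D, s, t as in Cardano's method) is the unique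
global minimizer over ℝ of the proximal cost
g(u) = (x − u)²/(2μ) − log(γ/(γ² + u²)); i.e. prox_Cauchy^μ(x) = z. -/
theorem cauchy_prox_equals_cardano (μ γ x : ℝ) (hμ : 0 < μ) (hγ : 0 < γ)
    (hcond : Real.sqrt μ / 2 ≤ γ) (p q D s t z : ℝ)
    (hp : p = γ ^ 2 + 2 * μ - x ^ 2 / 3)
    (hq : q = x * γ ^ 2 + 2 * x ^ 3 / 27 - (x / 3) * (γ ^ 2 + 2 * μ))
    (hD : D = p ^ 3 / 27 + q ^ 2 / 4)
    (hs : s = cbrt (q / 2 + Real.sqrt D))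
    (ht : t = cbrt (q / 2 - Real.sqrt D))
    (hz : z = x / 3 + s + t) :
    (∀ u : ℝ,
      (x - z) ^ 2 / (2 * μ) - Real.log (γ / (γ ^ 2 + z ^ 2)) ≤
        (x - u) ^ 2 / (2 * μ) - Real.log (γ / (γ ^ 2 + u ^ 2))) ∧
    (∀ w : ℝ,
      (∀ u : ℝ,
        (x - w) ^ 2 / (2 * μ) - Real.log (γ / (γ ^ 2 + w ^ 2)) ≤
          (x - u) ^ 2 / (2 * μ) - Real.log (γ / (γ ^ 2 + u ^ 2))) → w = z) := by
  have hμγ : μ ≤ 4 * γ ^ 2 := by nlinarith [Real.sq_sqrt hμ.le, Real.sqrt_nonneg μ]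
  subst hp hq hD
  have hy := cardano_formula (cardano_discriminant_nonneg hμ hμγ x) hs ht
  have hcrit : (z - x) / μ + 2 * z / (γ ^ 2 + z ^ 2) = 0 := by
    rw [hz, add_assoc]
    exact deriv_cauchyProxCost_eq_zero_of_cardano hμ.ne' hγ.ne' hy
  have hmin : ∀ u ≠ z, cauchyProxCost μ γ x z < cauchyProxCost μ γ x u := fun u hu =>
    lt_of_strictMono_deriv_of_deriv_eq_zero (hasDerivAt_cauchyProxCost hγ.ne' x)
      (strictMono_deriv_cauchyProxCost hμ hγ.ne' hμγ x) hcrit hu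
  refine ⟨fun u => ?_, fun w hw => ?_⟩
  · rcases eq_or_ne u z with rfl | hu
    · exact le_rfl
    · exact (hmin u hu).le
  · by_contra hwz
    exact (hw z).not_gt (hmin w hwz)
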